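/- Let $\mathcal{E}$ be an exact category and $E \in \mathcal{E}$. If $i\colon E \to I$ is an injective envelope (a left minimal inflation into an injective object), then the cokernel map $p\colon I \to \operatorname{coker} i$ lies in the radical of $\mathcal{E}$, i.e. for every morphism $k\colon \operatorname{coker} i \to I$ the endomorphism $1_I - k \circ p$ is invertible. -/
import Mathlib


open CategoryTheory Limits

universe v u

variable {E : Type u} [Category.{v} E] [Preadditive E]

/-- A (lightweight) exact structure on an additive category: a class of kernel-cokernel
pairs, called conflations. -/
structure ExactStruct (E : Type u) [Category.{v} E] [Preadditive E] where
  /-- the class of conflations -/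
  conflation : ∀ {A B C : E}, (A ⟶ B) → (B ⟶ C) → Prop
  comp_zero : ∀ {A B C : E} {i : A ⟶ B} {p : B ⟶ C}, conflation i p → i ≫ p = 0
  isKernel : ∀ {A B C : E} {i : A ⟶ B} {p : B ⟶ C} (h : conflation i p),
    Nonempty (IsLimit (KernelFork.ofι i (comp_zero h)))
  isCokernel : ∀ {A B C : E} {i : A ⟶ B} {p : B ⟶ C} (h : conflation i p),
    Nonempty (IsColimit (CokernelCofork.ofπ p (comp_zero h)))

/-- An inflation is the first map of a conflation. -/
def ExactStruct.IsInflation (S : ExactStruct E) {A B : E} (i : A ⟶ B) : Prop :=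
  ∃ (C : E) (p : B ⟶ C), S.conflation i p

/-- An object is injective (for the exact structure) if every morphism to it extends
along every inflation. -/
def ExactStruct.IsInj (S : ExactStruct E) (I : E) : Prop :=
  ∀ {A B : E} (i : A ⟶ B), S.IsInflation i → ∀ g : A ⟶ I, ∃ h : B ⟶ I, i ≫ h = g

/-- A morphism `g : A ⟶ B` is left minimal if every `g' : B ⟶ B` with `g ≫ g' = g`
is an isomorphism. -/
def LeftMinimal {A B : E} (g : A ⟶ B) : Prop :=
  ∀ g' : B ⟶ B, g ≫ g' = g → IsIso g'

/-- If `i : E₀ ⟶ I` is an injective envelope (a left minimal inflation into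
an injective object), then the cokernel map `p : I ⟶ C` of the conflation lies in the radical:
for every `k : C ⟶ I`, the endomorphism `𝟙 I - k ≫ p` is invertible. -/
theorem radical_of_injective_envelope (S : ExactStruct E)
    {E₀ I C : E} (i : E₀ ⟶ I) (p : I ⟶ C)
    (hconf : S.conflation i p) (hinj : S.IsInj I) (hmin : LeftMinimal i) :
    ∀ k : C ⟶ I, IsIso (𝟙 I - p ≫ k) := by
  intro k
  apply hmin
  simp [Preadditive.comp_sub, reassoc_of% S.comp_zero hconf]
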